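/- arXiv:2004.09225 — 3 statements merged into one kernel-verified Lean document; each statement's English description precedes it below -/
import Mathlib

section
/- For 0 < q ≤ p < 1, the model-M1 sudden-death winning probability of the perpetual first kicker, p(1-q)/(p+q-2pq), is at least the alternating-order winning probability (1-q+pq)/(2-p-q+2pq), with equality iff p = q. -/
/-- For `0 < q ≤ p < 1`, the model-M1 perpetual-first-kicker sudden-death winning
probability `p(1-q)/(p+q-2pq)` is at least the alternating-order winning
probability `(1-q+pq)/(2-p-q+2pq)`, with equality iff `p = q`. -/
theorem standard_ge_alternating_M1 (p q : ℝ)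
    (hq : 0 < q) (hqp : q ≤ p) (hp : p < 1) :
    (1 - q + p * q) / (2 - p - q + 2 * p * q) ≤ p * (1 - q) / (p + q - 2 * p * q) ∧
    (p * (1 - q) / (p + q - 2 * p * q) = (1 - q + p * q) / (2 - p - q + 2 * p * q) ↔ p = q) := by
  have hp0 : 0 < p := lt_of_lt_of_le hq hqp
  have hq1 : q < 1 := lt_of_le_of_lt hqp hp
  have hD1 : 0 < p + q - 2 * p * q := by nlinarith
  have hD2 : 0 < 2 - p - q + 2 * p * q := by nlinarith
  have hE : 0 < (1 - p) * (1 - q) + p * q := by nlinarith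
  refine ⟨?_, ?_, ?_⟩
  · rw [div_le_div_iff₀ hD2 hD1]
    nlinarith [mul_nonneg (sub_nonneg.2 hqp) hE.le]
  · intro h
    rw [div_eq_div_iff hD1.ne' hD2.ne'] at h
    nlinarith [mul_pos (mul_pos hp0 hq) hE, sq_nonneg (p - q)]
  · intro h
    subst h
    rw [div_eq_div_iff hD1.ne' hD2.ne']; ring
end

section
/- For 0 < q ≤ p < 1, the model-M2 alternating sudden-death winning probability (1-p+p²)/(2-2p+pq+p²) is at least 1/2, with equality iff p = q, and it is at most the model-M2 perpetual-first-kicker probability p(1-q)/(2p-pq-p²). -/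
/-- For `0 < q ≤ p < 1`, the model-M2 alternating sudden-death winning
probability `(1-p+p²)/(2-2p+pq+p²)` is at least `1/2` (equality iff `p = q`),
and at most the model-M2 perpetual-first-kicker probability `p(1-q)/(2p-pq-p²)`. -/
theorem alternating_bounds_M2 (p q : ℝ)
    (hq : 0 < q) (hqp : q ≤ p) (hp : p < 1) :
    1 / 2 ≤ (1 - p + p ^ 2) / (2 - 2 * p + p * q + p ^ 2) ∧
    ((1 - p + p ^ 2) / (2 - 2 * p + p * q + p ^ 2) = 1 / 2 ↔ p = q) ∧
    (1 - p + p ^ 2) / (2 - 2 * p + p * q + p ^ 2) ≤ p * (1 - q) / (2 * p - p * q - p ^ 2) := by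
  have hp0 : 0 < p := lt_of_lt_of_le hq hqp
  have hD1 : 0 < 2 - 2 * p + p * q + p ^ 2 := by nlinarith [sq_nonneg (1 - p)]
  have hD2 : 0 < 2 * p - p * q - p ^ 2 := by nlinarith
  refine ⟨?_, ?_, ?_⟩
  · rw [div_le_div_iff₀ (by norm_num) hD1]
    nlinarith
  · rw [div_eq_div_iff hD1.ne' (by norm_num : (2:ℝ) ≠ 0)]
    constructor
    · intro h; nlinarith
    · intro h; subst h; ring
  · rw [div_le_div_iff₀ hD1 hD2]
    nlinarith [mul_nonneg (mul_nonneg hp0.le (sub_nonneg.2 hqp)) (by nlinarith [sq_nonneg (1-p)] : (0:ℝ) ≤ (1-p)^2 + p*q)]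
end

section
/- Under the Behind-first rule, a team that kicks second in a round can never change its position to first kicker of the next round by deliberately missing while keeping at least as many goals; formally, if the second kicker's team is currently tied or ahead after a deliberate miss it kicks first next round only if it has strictly fewer goals or the mirrored order assigns it first when tied—and in all cases the expected goal total from deliberately missing is at most that from trying, so the Behind-first rule is strategy-proof. -/
/-- A shootout state: which team kicks first in the coming round (`true` = A),
and the current scores of teams A and B. -/
structure PKState where
  first : Bool
  scoreA : ℕ
  scoreB : ℕ

/-- Model M3 scoring probability of a single kick: a kicker whose team has
strictly fewer goals scores with probability `q`, otherwise with probability `p`;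
`scored` tells whether the kick was successful. -/
def kickProb (p q : ℝ) (own other : ℕ) (scored : Bool) : ℝ :=
  if scored then (if own < other then q else p)
  else 1 - (if own < other then q else p)

/-- Probability of a round outcome `o = (first kick scored, second kick scored)`
in model M3, with scoring probabilities taken at the beginning of the round. -/
def roundProb (p q : ℝ) (s : PKState) (o : Bool × Bool) : ℝ :=
  if s.first then
    kickProb p q s.scoreA s.scoreB o.1 * kickProb p q s.scoreB s.scoreA o.2
  else
    kickProb p q s.scoreB s.scoreA o.1 * kickProb p q s.scoreA s.scoreB o.2

/-- Scores of teams A and B after a round with outcome `o`. -/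
def updScores (s : PKState) (o : Bool × Bool) : ℕ × ℕ :=
  if s.first then (s.scoreA + (if o.1 then 1 else 0), s.scoreB + (if o.2 then 1 else 0))
  else (s.scoreA + (if o.2 then 1 else 0), s.scoreB + (if o.1 then 1 else 0))

/-- A shooting-order mechanism: given the first kicker of the previous round,
the scores after that round and its outcome, it returns the first kicker of the
next round. -/
abbrev Mechanism := Bool → ℕ → ℕ → Bool × Bool → Bool

/-- Catch-up rule: the first kicker alternates, except that the order stays the
same if the first kicker missed and the second kicker scored. -/
def catchUp : Mechanism := fun f _ _ o => if !o.1 && o.2 then f else !f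

/-- Behind-first rule: the team with strictly fewer goals kicks first next;
if the score is tied, the previous order is mirrored. -/
def behindFirst : Mechanism := fun f sA sB _ =>
  if sA < sB then true else if sB < sA then false else !f

/-- The state after playing one round with outcome `o` under mechanism `m`. -/
def step (m : Mechanism) (s : PKState) (o : Bool × Bool) : PKState :=
  ⟨m s.first (updScores s o).1 (updScores s o).2 o, (updScores s o).1, (updScores s o).2⟩

/-- The state after playing the rounds with outcomes `os` under mechanism `m`. -/
def run (m : Mechanism) (s : PKState) : List (Bool × Bool) → PKState
  | [] => s
  | o :: os => run m (step m s o) os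

/-- The model-M3 probability of the complete sequence of round outcomes `os`
under mechanism `m`, starting from state `s`. -/
def seqProb (p q : ℝ) (m : Mechanism) (s : PKState) : List (Bool × Bool) → ℝ
  | [] => 1
  | o :: os => roundProb p q s o * seqProb p q m (step m s o) os

/-- The probability that team `t` (`true` = A) finishes with strictly more goals
than its opponent after `n` further rounds played under the Behind-first rule,
starting from state `s`, in model M3. -/
def winProb (p q : ℝ) (t : Bool) : ℕ → PKState → ℝ
  | 0, s => if (if t then s.scoreB < s.scoreA else s.scoreA < s.scoreB) then 1 else 0
  | n + 1, s => ∑ o : Bool × Bool, roundProb p q s o * winProb p q t n (step behindFirst s o)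


lemma winProb_succ (p q : ℝ) (t : Bool) (n : ℕ) (s : PKState) :
    winProb p q t (n+1) s =
      ∑ x : Bool, ∑ y : Bool,
        kickProb p q s.scoreA s.scoreB x * kickProb p q s.scoreB s.scoreA y *
          winProb p q t n ⟨behindFirst s.first (s.scoreA + (if x then 1 else 0))
              (s.scoreB + (if y then 1 else 0)) (x, y),
            s.scoreA + (if x then 1 else 0), s.scoreB + (if y then 1 else 0)⟩ := by
  rcases s with ⟨f, a, b⟩
  cases f <;>
    simp [winProb, roundProb, step, updScores, behindFirst, Fintype.sum_prod_type,
      Fintype.sum_bool] <;> ring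

lemma key_ineq (pa pb pa' pb' w00 w01 w10 w11 v00 v01 v10 v11 : ℝ)
    (hpa0 : 0 ≤ pa) (hpa1 : pa ≤ 1) (hpb0 : 0 ≤ pb) (hpb1 : pb ≤ 1)
    (hpa'0 : 0 ≤ pa') (hpa'1 : pa' ≤ 1) (hpb'0 : 0 ≤ pb') (hpb'1 : pb' ≤ 1)
    (hpaa : pa ≤ pa') (hpbb : pb' ≤ pb)
    (h00 : w00 ≤ v00) (h01 : w01 ≤ v01) (h10 : w10 ≤ v10) (h11 : w11 ≤ v11)
    (hvA0 : v00 ≤ v10) (hvA1 : v01 ≤ v11) (hvB0 : v01 ≤ v00) (hvB1 : v11 ≤ v10) :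
    (1-pa)*(1-pb)*w00 + (1-pa)*pb*w01 + pa*(1-pb)*w10 + pa*pb*w11 ≤
    (1-pa')*(1-pb')*v00 + (1-pa')*pb'*v01 + pa'*(1-pb')*v10 + pa'*pb'*v11 := by
  have S2 : (1-pa)*(1-pb)*w00 + (1-pa)*pb*w01 + pa*(1-pb)*w10 + pa*pb*w11 ≤
      (1-pa)*(1-pb)*v00 + (1-pa)*pb*v01 + pa*(1-pb)*v10 + pa*pb*v11 := by
    gcongr <;> nlinarith
  have h3 : 0 ≤ (pa'-pa)*((1-pb)*(v10-v00) + pb*(v11-v01)) := by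
    apply mul_nonneg (by linarith)
    have := mul_nonneg (by linarith : (0:ℝ) ≤ 1-pb) (by linarith : (0:ℝ) ≤ v10-v00)
    have := mul_nonneg hpb0 (by linarith : (0:ℝ) ≤ v11-v01)
    linarith
  have h4 : 0 ≤ (pb-pb')*((1-pa')*(v00-v01) + pa'*(v10-v11)) := by
    apply mul_nonneg (by linarith)
    have := mul_nonneg (by linarith : (0:ℝ) ≤ 1-pa') (by linarith : (0:ℝ) ≤ v00-v01)
    have := mul_nonneg hpa'0 (by linarith : (0:ℝ) ≤ v10-v11)
    linarith
  nlinarith [S2, h3, h4]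

lemma kickProb_true (p q : ℝ) (a b : ℕ) : kickProb p q a b true = if a < b then q else p := by
  simp [kickProb]

lemma kickProb_false (p q : ℝ) (a b : ℕ) :
    kickProb p q a b false = 1 - (if a < b then q else p) := by
  simp [kickProb]

lemma mono_true (p q : ℝ) (hq : 0 < q) (hqp : q ≤ p) (hp : p < 1) :
    ∀ (n : ℕ) (s s' : PKState), s.scoreA ≤ s'.scoreA → s'.scoreB ≤ s.scoreB →
      winProb p q true n s ≤ winProb p q true n s' := by
  intro n
  induction n with
  | zero =>
    intro s s' h1 h2
    obtain ⟨f, a, b⟩ := s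
    obtain ⟨f', a', b'⟩ := s'
    simp only at h1 h2
    simp only [winProb]
    split_ifs <;> first | (exfalso; first | exact ‹False› | omega) | norm_num
  | succ n ih =>
    intro s s' h1 h2
    obtain ⟨f, a, b⟩ := s
    obtain ⟨f', a', b'⟩ := s'
    simp only at h1 h2
    rw [winProb_succ, winProb_succ]
    simp only [Fintype.sum_bool, kickProb_true, kickProb_false, Bool.false_eq_true, if_true, if_false, reduceIte, add_zero]
    have hq0 : (0:ℝ) ≤ q := hq.le
    have hp0 : (0:ℝ) ≤ p := hq0.trans hqp
    have hp1 : p ≤ 1 := hp.le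
    have hB : ∀ x y : ℕ, (0 ≤ (if x < y then q else p)) ∧ ((if x < y then q else p) ≤ 1) := by
      intro x y; constructor <;> split_ifs <;> linarith
    have hpaa : (if a < b then q else p) ≤ (if a' < b' then q else p) := by
      split_ifs <;> first | rfl | exact hqp | (exfalso; omega)
    have hpbb : (if b' < a' then q else p) ≤ (if b < a then q else p) := by
      split_ifs <;> first | rfl | exact hqp | (exfalso; omega)
    have h00 : winProb p q true n ⟨behindFirst f a b (false, false), a, b⟩ ≤
        winProb p q true n ⟨behindFirst f' a' b' (false, false), a', b'⟩ := ih _ _ h1 h2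
    have h01 : winProb p q true n ⟨behindFirst f a (b+1) (false, true), a, b+1⟩ ≤
        winProb p q true n ⟨behindFirst f' a' (b'+1) (false, true), a', b'+1⟩ :=
      ih _ _ h1 (Nat.add_le_add_right h2 1)
    have h10 : winProb p q true n ⟨behindFirst f (a+1) b (true, false), a+1, b⟩ ≤
        winProb p q true n ⟨behindFirst f' (a'+1) b' (true, false), a'+1, b'⟩ :=
      ih _ _ (Nat.add_le_add_right h1 1) h2
    have h11 : winProb p q true n ⟨behindFirst f (a+1) (b+1) (true, true), a+1, b+1⟩ ≤
        winProb p q true n ⟨behindFirst f' (a'+1) (b'+1) (true, true), a'+1, b'+1⟩ :=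
      ih _ _ (Nat.add_le_add_right h1 1) (Nat.add_le_add_right h2 1)
    have hvA0 : winProb p q true n ⟨behindFirst f' a' b' (false, false), a', b'⟩ ≤
        winProb p q true n ⟨behindFirst f' (a'+1) b' (true, false), a'+1, b'⟩ :=
      ih _ _ (Nat.le_succ a') (le_refl b')
    have hvA1 : winProb p q true n ⟨behindFirst f' a' (b'+1) (false, true), a', b'+1⟩ ≤
        winProb p q true n ⟨behindFirst f' (a'+1) (b'+1) (true, true), a'+1, b'+1⟩ :=
      ih _ _ (Nat.le_succ a') (le_refl (b'+1))
    have hvB0 : winProb p q true n ⟨behindFirst f' a' (b'+1) (false, true), a', b'+1⟩ ≤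
        winProb p q true n ⟨behindFirst f' a' b' (false, false), a', b'⟩ :=
      ih _ _ (le_refl a') (Nat.le_succ b')
    have hvB1 : winProb p q true n ⟨behindFirst f' (a'+1) (b'+1) (true, true), a'+1, b'+1⟩ ≤
        winProb p q true n ⟨behindFirst f' (a'+1) b' (true, false), a'+1, b'⟩ :=
      ih _ _ (le_refl (a'+1)) (Nat.le_succ b')
    linarith [key_ineq (if a < b then q else p) (if b < a then q else p)
      (if a' < b' then q else p) (if b' < a' then q else p) _ _ _ _ _ _ _ _
      (hB a b).1 (hB a b).2 (hB b a).1 (hB b a).2 (hB a' b').1 (hB a' b').2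
      (hB b' a').1 (hB b' a').2 hpaa hpbb h00 h01 h10 h11 hvA0 hvA1 hvB0 hvB1]

lemma mono_false (p q : ℝ) (hq : 0 < q) (hqp : q ≤ p) (hp : p < 1) :
    ∀ (n : ℕ) (s s' : PKState), s.scoreB ≤ s'.scoreB → s'.scoreA ≤ s.scoreA →
      winProb p q false n s ≤ winProb p q false n s' := by
  intro n
  induction n with
  | zero =>
    intro s s' h1 h2
    obtain ⟨f, a, b⟩ := s
    obtain ⟨f', a', b'⟩ := s'
    simp only at h1 h2
    simp only [winProb]
    split_ifs <;> first | (exfalso; first | exact ‹False› | omega) | norm_num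
  | succ n ih =>
    intro s s' h1 h2
    obtain ⟨f, a, b⟩ := s
    obtain ⟨f', a', b'⟩ := s'
    simp only at h1 h2
    rw [winProb_succ, winProb_succ]
    simp only [Fintype.sum_bool, kickProb_true, kickProb_false, Bool.false_eq_true, if_true,
      if_false, reduceIte, add_zero]
    have hq0 : (0:ℝ) ≤ q := hq.le
    have hp0 : (0:ℝ) ≤ p := hq0.trans hqp
    have hp1 : p ≤ 1 := hp.le
    have hB : ∀ x y : ℕ, (0 ≤ if x < y then q else p) ∧ ((if x < y then q else p) ≤ 1) := by
      intro x y; constructor <;> split_ifs <;> linarith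
    have hpaa : (if b < a then q else p) ≤ (if b' < a' then q else p) := by
      split_ifs <;> first | rfl | exact hqp | (exfalso; omega)
    have hpbb : (if a' < b' then q else p) ≤ (if a < b then q else p) := by
      split_ifs <;> first | rfl | exact hqp | (exfalso; omega)
    have h00 : winProb p q false n ⟨behindFirst f a b (false, false), a, b⟩ ≤
        winProb p q false n ⟨behindFirst f' a' b' (false, false), a', b'⟩ := ih _ _ h1 h2
    have h01 : winProb p q false n ⟨behindFirst f (a+1) b (true, false), a+1, b⟩ ≤
        winProb p q false n ⟨behindFirst f' (a'+1) b' (true, false), a'+1, b'⟩ :=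
      ih _ _ h1 (Nat.add_le_add_right h2 1)
    have h10 : winProb p q false n ⟨behindFirst f a (b+1) (false, true), a, b+1⟩ ≤
        winProb p q false n ⟨behindFirst f' a' (b'+1) (false, true), a', b'+1⟩ :=
      ih _ _ (Nat.add_le_add_right h1 1) h2
    have h11 : winProb p q false n ⟨behindFirst f (a+1) (b+1) (true, true), a+1, b+1⟩ ≤
        winProb p q false n ⟨behindFirst f' (a'+1) (b'+1) (true, true), a'+1, b'+1⟩ :=
      ih _ _ (Nat.add_le_add_right h1 1) (Nat.add_le_add_right h2 1)
    have hvA0 : winProb p q false n ⟨behindFirst f' a' b' (false, false), a', b'⟩ ≤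
        winProb p q false n ⟨behindFirst f' a' (b'+1) (false, true), a', b'+1⟩ :=
      ih _ _ (Nat.le_succ b') (le_refl a')
    have hvA1 : winProb p q false n ⟨behindFirst f' (a'+1) b' (true, false), a'+1, b'⟩ ≤
        winProb p q false n ⟨behindFirst f' (a'+1) (b'+1) (true, true), a'+1, b'+1⟩ :=
      ih _ _ (Nat.le_succ b') (le_refl (a'+1))
    have hvB0 : winProb p q false n ⟨behindFirst f' (a'+1) b' (true, false), a'+1, b'⟩ ≤
        winProb p q false n ⟨behindFirst f' a' b' (false, false), a', b'⟩ :=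
      ih _ _ (le_refl b') (Nat.le_succ a')
    have hvB1 : winProb p q false n ⟨behindFirst f' (a'+1) (b'+1) (true, true), a'+1, b'+1⟩ ≤
        winProb p q false n ⟨behindFirst f' a' (b'+1) (false, true), a', b'+1⟩ :=
      ih _ _ (le_refl (b'+1)) (Nat.le_succ a')
    linarith [key_ineq (if b < a then q else p) (if a < b then q else p)
      (if b' < a' then q else p) (if a' < b' then q else p) _ _ _ _ _ _ _ _
      (hB b a).1 (hB b a).2 (hB a b).1 (hB a b).2 (hB b' a').1 (hB b' a').2
      (hB a' b').1 (hB a' b').2 hpaa hpbb h00 h01 h10 h11 hvA0 hvA1 hvB0 hvB1]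

/-- The Behind-first rule is strategy-proof: in any state `s`, whatever the
result `b1` of the first kick of the current round, the team kicking second
cannot profit from deliberately missing—its probability of eventually winning
(over any number of further rounds) after scoring its kick is at least that
after missing it, since winning probabilities are monotone in own goals and the
first-kick position can only be obtained by having fewer goals. -/
theorem behindFirst_strategyproof (p q : ℝ)
    (hq : 0 < q) (hqp : q ≤ p) (hp : p < 1) :
    ∀ (n : ℕ) (s : PKState) (b1 : Bool),
      winProb p q (!s.first) n (step behindFirst s (b1, false)) ≤
      winProb p q (!s.first) n (step behindFirst s (b1, true)) := by
  intro n s b1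
  obtain ⟨f, a, b⟩ := s
  cases f with
  | false =>
    simp only [step, updScores, Bool.not_false]
    exact mono_true p q hq hqp hp n _ _ (by simp) (by simp)
  | true =>
    simp only [step, updScores, Bool.not_true]
    exact mono_false p q hq hqp hp n _ _ (by simp) (by simp)
end
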